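/- There exists an allocation instance with an epistemic-envy-free (EEF) allocation but no iEF lottery. Specifically, for the instance with 3 agents and 4 items where v_1 = (4/10, 3/10, 3/10, 0), v_2 = (4/10, 3/10, 3/10, 0), v_3 = (0, 3/10, 3/10, 4/10) over items (a,b,c,d): the allocation ({a}, {b,c}, {d}) is EEF, but no iEF lottery exists. -/

import Mathlib

/-!
In an iEF lottery an agent receiving `S` expects, from each of the three bundles, at most her
value of `S`; the three bundles together are worth her whole value `1`, so every allocation in the
support is proportional. In this instance only `({a},{b,c},{d})` and `({b,c},{a},{d})` are
proportional, and in each of them the agent holding `{a}` can infer the allocation from her own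
bundle, so her conditional expectation of the `{b,c}` bundle is its actual value `6/10 > 4/10`.
The EEF part is a finite check with explicit witnesses.
-/

open Finset

/-- Value of agent `i` for a bundle `S` of items (additive valuations). -/
def bundleVal {n m : ℕ} (v : Fin n → Fin m → ℝ) (i : Fin n) (S : Finset (Fin m)) : ℝ :=
  ∑ j ∈ S, v i j

/-- Probability that agent `i` receives bundle `S` under lottery `x`. -/
def prBundle {n m : ℕ} (x : (Fin n → Finset (Fin m)) → ℝ) (i : Fin n) (S : Finset (Fin m)) : ℝ :=
  ∑ a ∈ Finset.univ.filter (fun a => a i = S), x a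

/-- Interim envy-freeness: for all `i ≠ k` and every bundle `S` received with positive
probability, `v_i(S) ≥ E[v_i(A_k) | A_i = S]` (stated multiplied through by the
positive probability `Pr[A_i = S]`). -/
def IEF {n m : ℕ} (v : Fin n → Fin m → ℝ) (x : (Fin n → Finset (Fin m)) → ℝ) : Prop :=
  ∀ i k : Fin n, i ≠ k → ∀ S : Finset (Fin m), 0 < prBundle x i S →
    (∑ a ∈ Finset.univ.filter (fun a => a i = S), x a * bundleVal v i (a k))
      ≤ bundleVal v i S * prBundle x i S

/-- An allocation is a partition of the items into bundles, one per agent. -/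
def IsPartition {n m : ℕ} (a : Fin n → Finset (Fin m)) : Prop :=
  (∀ i k : Fin n, i ≠ k → Disjoint (a i) (a k)) ∧ ∀ j : Fin m, ∃ i, j ∈ a i
/-- Valuations of the instance: items (a,b,c,d) = (0,1,2,3). -/
noncomputable def v8 : Fin 3 → Fin 4 → ℝ :=
  ![![4/10, 3/10, 3/10, 0], ![4/10, 3/10, 3/10, 0], ![0, 3/10, 3/10, 4/10]]

/-- The allocation ({a}, {b,c}, {d}). -/
def A8 : Fin 3 → Finset (Fin 4) := ![{0}, {1, 2}, {3}]

instance IsPartition.decidablePred {n m : ℕ} : DecidablePred (IsPartition (n := n) (m := m)) := fun a => by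
  unfold IsPartition; infer_instance

section General

variable {n m : ℕ}

theorem IsPartition.eq_filter {a : Fin n → Finset (Fin m)} (ha : IsPartition a) :
    ∃ f : Fin m → Fin n, a = fun i => univ.filter (fun j => f j = i) := by
  choose f hf using ha.2
  refine ⟨f, funext fun i => Finset.ext fun j => ?_⟩
  simp only [mem_filter, mem_univ, true_and]
  refine ⟨fun hj => ?_, fun h => h ▸ hf j⟩
  by_contra hne
  exact Finset.disjoint_left.1 (ha.1 _ _ hne) (hf j) hj

theorem IsPartition.sum_bundleVal {a : Fin n → Finset (Fin m)} (ha : IsPartition a)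
    (v : Fin n → Fin m → ℝ) (i : Fin n) : ∑ k, bundleVal v i (a k) = ∑ j, v i j := by
  have huniv : (univ : Finset (Fin m)) = univ.biUnion a := by
    ext j
    simpa using ha.2 j
  rw [huniv, sum_biUnion fun k _ l _ hkl => ha.1 k l hkl]
  rfl

theorem prBundle_pos {x : (Fin n → Finset (Fin m)) → ℝ} (hx : ∀ a, 0 ≤ x a)
    {A : Fin n → Finset (Fin m)} (hA : 0 < x A) (i : Fin n) : 0 < prBundle x i (A i) :=
  hA.trans_le <| single_le_sum (fun a _ => hx a) (by simp)

variable {v : Fin n → Fin m → ℝ} {x : (Fin n → Finset (Fin m)) → ℝ}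

theorem IEF.sum_mul_bundleVal_le (hief : IEF v x) {i : Fin n} {S : Finset (Fin m)}
    (hS : 0 < prBundle x i S) (k : Fin n) :
    ∑ a ∈ univ.filter (fun a => a i = S), x a * bundleVal v i (a k)
      ≤ bundleVal v i S * prBundle x i S := by
  obtain rfl | hik := eq_or_ne i k
  · refine (Finset.sum_congr rfl fun a ha => ?_).trans_le (mul_sum _ _ _).ge
    rw [(mem_filter.1 ha).2, mul_comm]
  · exact hief i k hik S hS

theorem IEF.sum_le_card_mul_bundleVal (hief : IEF v x) (hx : ∀ a, 0 ≤ x a)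
    (hpart : ∀ a, 0 < x a → IsPartition a) {A : Fin n → Finset (Fin m)} (hA : 0 < x A)
    (i : Fin n) : ∑ j, v i j ≤ n * bundleVal v i (A i) := by
  set S := A i
  set F := univ.filter (fun a : Fin n → Finset (Fin m) => a i = S)
  have hP := prBundle_pos hx hA i
  have htotal : ∑ k, ∑ a ∈ F, x a * bundleVal v i (a k) = prBundle x i S * ∑ j, v i j := by
    rw [sum_comm, prBundle, sum_mul]
    refine Finset.sum_congr rfl fun a _ => ?_
    rw [← mul_sum]
    obtain hxa | hxa := (hx a).eq_or_lt
    · simp [← hxa]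
    · rw [(hpart a hxa).sum_bundleVal]
  have hbound : ∑ k : Fin n, ∑ a ∈ F, x a * bundleVal v i (a k)
      ≤ n * (bundleVal v i S * prBundle x i S) := by
    simpa using sum_le_sum fun k (_ : k ∈ univ) => hief.sum_mul_bundleVal_le hP k
  rw [htotal] at hbound
  exact le_of_mul_le_mul_left (by linarith) hP

theorem IEF.bundleVal_le_of_determined (hief : IEF v x) (hx : ∀ a, 0 ≤ x a)
    {A : Fin n → Finset (Fin m)} (hA : 0 < x A) {i : Fin n}
    (hdet : ∀ a, a i = A i → 0 < x a → a = A) {k : Fin n} (hik : i ≠ k) :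
    bundleVal v i (A k) ≤ bundleVal v i (A i) := by
  have hzero : ∀ a ∈ univ.filter (fun a => a i = A i), a ≠ A → x a = 0 := fun a ha hne =>
    ((hx a).eq_or_lt.resolve_right fun hxa => hne (hdet a (mem_filter.1 ha).2 hxa)).symm
  have hmem : A ∈ univ.filter (fun a => a i = A i) := by simp
  have hpr : prBundle x i (A i) = x A := sum_eq_single_of_mem A hmem hzero
  have h := hief i k hik (A i) (hpr ▸ hA)
  rw [sum_eq_single_of_mem A hmem fun a ha hne => by rw [hzero a ha hne, zero_mul], hpr] at h
  exact le_of_mul_le_mul_left (by linarith) hA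

end General

/-- The other proportional allocation ({b,c}, {a}, {d}). -/
def B8 : Fin 3 → Finset (Fin 4) := ![{1, 2}, {0}, {3}]

/-- `v8` in tenths, so that questions about `v8` become decidable. -/
def v8Tenths : Fin 3 → Fin 4 → ℕ := ![![4, 3, 3, 0], ![4, 3, 3, 0], ![0, 3, 3, 4]]

theorem bundleVal_v8 (i : Fin 3) (S : Finset (Fin 4)) :
    bundleVal v8 i S = ((∑ j ∈ S, v8Tenths i j : ℕ) : ℝ) / 10 := by
  have hv : ∀ j, v8 i j = (v8Tenths i j : ℝ) / 10 := by
    intro j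
    fin_cases i <;> fin_cases j <;> norm_num [v8, v8Tenths]
  simp [bundleVal, hv, sum_div]

theorem bundleVal_v8_le_mul_iff {i : Fin 3} {S T : Finset (Fin 4)} (c : ℕ) :
    bundleVal v8 i S ≤ c * bundleVal v8 i T ↔
      ∑ j ∈ S, v8Tenths i j ≤ c * ∑ j ∈ T, v8Tenths i j := by
  rw [bundleVal_v8, bundleVal_v8, mul_div_assoc', div_le_div_iff_of_pos_right (by norm_num)]
  exact_mod_cast Iff.rfl

theorem bundleVal_v8_le_iff {i : Fin 3} {S T : Finset (Fin 4)} :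
    bundleVal v8 i S ≤ bundleVal v8 i T ↔ ∑ j ∈ S, v8Tenths i j ≤ ∑ j ∈ T, v8Tenths i j := by
  simpa using bundleVal_v8_le_mul_iff (i := i) (S := S) (T := T) 1

def eefWitness8 : Fin 3 → Fin 3 → Finset (Fin 4) :=
  ![![{0}, {1}, {2, 3}], A8, ![{0, 1}, {2}, {3}]]

theorem isEEF_A8 (i : Fin 3) : ∃ B : Fin 3 → Finset (Fin 4), IsPartition B ∧ B i = A8 i ∧
    ∀ j : Fin 3, bundleVal v8 i (B j) ≤ bundleVal v8 i (A8 i) := by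
  refine ⟨eefWitness8 i, ?_⟩
  simp only [bundleVal_v8_le_iff]
  revert i
  decide

theorem eq_A8_or_B8_of_proportional {a : Fin 3 → Finset (Fin 4)} (ha : IsPartition a)
    (hprop : ∀ i, ∑ j, v8 i j ≤ (3 : ℕ) * bundleVal v8 i (a i)) : a = A8 ∨ a = B8 := by
  obtain ⟨f, rfl⟩ := ha.eq_filter
  have key : ∀ f : Fin 4 → Fin 3,
      (∀ i, ∑ j, v8Tenths i j ≤ 3 * ∑ j ∈ univ.filter (fun j => f j = i), v8Tenths i j) →
      ((fun i => univ.filter (fun j => f j = i)) = A8 ∨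
        (fun i => univ.filter (fun j => f j = i)) = B8) := by
    decide
  exact key f fun i => (bundleVal_v8_le_mul_iff 3).1 (hprop i)

/-- The agent holding `{a}` envies the holder of `{b,c}`, and her bundle tells her which of the
two allocations was drawn. -/
theorem exists_envious_of_eq_A8_or_B8 {A : Fin 3 → Finset (Fin 4)} (hA : A = A8 ∨ A = B8) :
    ∃ i k, i ≠ k ∧ (∀ B, B = A8 ∨ B = B8 → B i = A i → B = A) ∧
      ¬ bundleVal v8 i (A k) ≤ bundleVal v8 i (A i) := by
  rcases hA with rfl | rfl
  · refine ⟨0, 1, by decide, ?_, by rw [bundleVal_v8_le_iff]; decide⟩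
    rintro B (rfl | rfl) hB
    · rfl
    · exact absurd hB (by decide)
  · refine ⟨1, 0, by decide, ?_, by rw [bundleVal_v8_le_iff]; decide⟩
    rintro B (rfl | rfl) hB
    · exact absurd hB (by decide)
    · rfl

/-- the allocation ({a},{b,c},{d}) is epistemic-envy-free, yet the instance
admits no iEF lottery. -/
theorem EEF_without_iEF :
    IsPartition A8 ∧
    (∀ i : Fin 3, ∃ B : Fin 3 → Finset (Fin 4), IsPartition B ∧ B i = A8 i ∧
      ∀ j : Fin 3, bundleVal v8 i (B j) ≤ bundleVal v8 i (A8 i)) ∧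
    (∀ x : (Fin 3 → Finset (Fin 4)) → ℝ,
      (∀ a, 0 ≤ x a) → (∑ a, x a = 1) → (∀ a, 0 < x a → IsPartition a) →
      IEF v8 x → False) := by
  refine ⟨by decide, isEEF_A8, fun x hx hsum hpart hief => ?_⟩
  have hsupp : ∀ a, 0 < x a → a = A8 ∨ a = B8 := fun a ha =>
    eq_A8_or_B8_of_proportional (hpart a ha) (hief.sum_le_card_mul_bundleVal hx hpart ha)
  obtain ⟨A, -, hA⟩ := exists_ne_zero_of_sum_ne_zero (hsum ▸ one_ne_zero)
  have hA : 0 < x A := (hx A).lt_of_ne' hA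
  obtain ⟨i, k, hik, hdet, henvy⟩ := exists_envious_of_eq_A8_or_B8 (hsupp A hA)
  exact henvy <| hief.bundleVal_le_of_determined hx hA
    (fun a hai hxa => hdet a (hsupp a hxa) hai) hik
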